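/- (Correction of the dual solution in the primal degenerate case.) Let 𝒮 ∈ ℝ^{nx×N·nu} and let T ∈ ℝ^{nx×n_d} be a matrix whose columns span the column space of 𝒮. Let γ_0,…,γ_N, γ_tc ∈ ℝ^{nx} and λ̂_prev, λ̂ ∈ ℝ^{nx} satisfy γ_0 = λ̂_prev − 𝒜ᵀ(γ_tc + λ̂), Tᵀ(γ_tc + λ̂) = 0, and γ_N = −γ_tc. Set w := −(γ_tc + λ̂) and define λ_t := γ_t − Φ(t)ᵀw for t = 0,…,N and λ_tc := γ_tc + w (i.e. λ = γ + Z w with Z = [−𝒜, −𝒟, I]ᵀ). Then w ∈ ker(𝒮ᵀ), λ_0 = λ̂_prev, λ_N = λ̂, and λ_tc = −λ̂. -/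
import Mathlib


open Matrix Finset

/-- **Correction of the dual solution in the primal degenerate case.**
With `Φ(t) = A_{N−1}⋯A_t` (`Φ(N) = I`, `𝒜 = Φ(0)`), `T` a matrix whose columns
span the column space of the controllability matrix `𝒮`, and `γ` the given dual
solution satisfying `γ_0 = λ̂_prev − 𝒜ᵀ(γ_tc + λ̂)`, `Tᵀ(γ_tc + λ̂) = 0`,
`γ_N = −γ_tc`: setting `w = −(γ_tc + λ̂)`, `λ_t = γ_t − Φ(t)ᵀw`, `λ_tc = γ_tc + w`
(i.e. `λ = γ + Zw` with `Z = [−𝒜, −𝒟, I]ᵀ`) yields `w ∈ ker(𝒮ᵀ)`,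
`λ_0 = λ̂_prev`, `λ_N = λ̂`, and `λ_tc = −λ̂`. -/
theorem degenerate_dual_correction
    (N nx nu nd : ℕ) (hN : 1 ≤ N)
    (A : ℕ → Matrix (Fin nx) (Fin nx) ℝ)
    (B : ℕ → Matrix (Fin nx) (Fin nu) ℝ)
    (Phi : ℕ → Matrix (Fin nx) (Fin nx) ℝ)
    (hPhiN : Phi N = 1)
    (hPhi : ∀ t < N, Phi t = Phi (t + 1) * A t)
    (T : Matrix (Fin nx) (Fin nd) ℝ)
    (hT : ∀ v : Fin nx → ℝ,
      (∃ c : Fin nd → ℝ, v = T *ᵥ c) ↔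
      (∃ u : ℕ → Fin nu → ℝ, v = ∑ t ∈ Finset.range N, Phi (t + 1) *ᵥ (B t *ᵥ u t)))
    (γ : ℕ → Fin nx → ℝ) (γtc : Fin nx → ℝ)
    (lamhatPrev lamhat : Fin nx → ℝ)
    (hγ0 : γ 0 = lamhatPrev - (Phi 0)ᵀ *ᵥ (γtc + lamhat))
    (hγT : Tᵀ *ᵥ (γtc + lamhat) = 0)
    (hγN : γ N = -γtc)
    (w : Fin nx → ℝ) (hw : w = -(γtc + lamhat))
    (lam : ℕ → Fin nx → ℝ) (hlam : ∀ t, lam t = γ t - (Phi t)ᵀ *ᵥ w)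
    (lamtc : Fin nx → ℝ) (hlamtc : lamtc = γtc + w) :
    (∀ t < N, (B t)ᵀ *ᵥ ((Phi (t + 1))ᵀ *ᵥ w) = 0) ∧
    lam 0 = lamhatPrev ∧
    lam N = lamhat ∧
    lamtc = -lamhat := by

  have hTw : Tᵀ *ᵥ w = 0 := by
    rw [hw, Matrix.mulVec_neg, hγT, neg_zero]
  refine ⟨?_, ?_, ?_, ?_⟩
  · intro t ht
    funext j
    -- the corresponding column of the controllability matrix lies in the range of T
    set v : Fin nx → ℝ := Phi (t + 1) *ᵥ (B t *ᵥ Pi.single j 1) with hv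
    have hsum : v = ∑ t' ∈ Finset.range N,
        Phi (t' + 1) *ᵥ (B t' *ᵥ (fun t'' => if t'' = t then Pi.single j 1 else (0 : Fin nu → ℝ)) t') := by
      rw [Finset.sum_eq_single_of_mem t (Finset.mem_range.2 ht)]
      · simp [hv]
      · intro b _ hb
        simp [hb]
    obtain ⟨c, hc⟩ := (hT v).mpr ⟨_, hsum⟩
    have : ((B t)ᵀ *ᵥ ((Phi (t + 1))ᵀ *ᵥ w)) j
        = Pi.single j 1 ⬝ᵥ ((B t)ᵀ *ᵥ ((Phi (t + 1))ᵀ *ᵥ w)) := by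
      simp [single_dotProduct]
    rw [this, Matrix.dotProduct_mulVec, Matrix.vecMul_transpose,
        Matrix.dotProduct_mulVec, Matrix.vecMul_transpose, ← hv, hc,
        dotProduct_comm, Matrix.dotProduct_mulVec]
    rw [← Matrix.mulVec_transpose, hTw]
    simp
  · rw [hlam, hγ0, hw, Matrix.mulVec_neg, sub_neg_eq_add, sub_add_cancel]
  · rw [hlam, hγN, hPhiN, hw, Matrix.transpose_one, Matrix.one_mulVec,
      sub_neg_eq_add, neg_add_cancel_left]
  · rw [hlamtc, hw]
    abel
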